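/- For the nodal cubic C = V(x^3 + x^2 - y^2) over ℝ, the limits of tangent directions at nonsingular points of C approaching the origin are exactly the two lines y = x and y = -x. Concretely: if (a_n, b_n) is a sequence of points of C with (a_n, b_n) ≠ (0,0), (a_n,b_n) → (0,0), and the normalized gradient directions converge, then the limit tangent line is {(x,y) : x - y = 0} or {(x,y) : x + y = 0}. -/

import Mathlib

/-! On the cubic, `b² = a²(a + 1)`, so away from the origin `a ≠ 0` and the gradient
`g = (a(3a + 2), -2b)` satisfies `g₂² / g₁² = 4(a + 1) / (3a + 2)² → 1` as `a → 0`.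
Since the sup norm of `g` dominates `|g₁|`, the unit normals `u = g / ‖g‖` satisfy
`|u₁² - u₂²| ≤ |1 - g₂² / g₁²| → 0`, so the limit `v` is a unit vector with `v₁² = v₂²`,
i.e. `v ∥ (1, ±1)`. -/

open Filter Topology

lemma fst_ne_zero_of_nodal_cubic {x y : ℝ} (hC : x ^ 3 + x ^ 2 - y ^ 2 = 0)
    (hne : (x, y) ≠ (0, 0)) : x ≠ 0 := by
  rintro rfl
  have hy : y = 0 := by nlinarith [sq_nonneg y]
  exact hne (by rw [hy])

lemma nodal_cubic_gradient_ne_zero {x y : ℝ} (hC : x ^ 3 + x ^ 2 - y ^ 2 = 0)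
    (hne : (x, y) ≠ (0, 0)) : ((3 * x ^ 2 + 2 * x, -2 * y) : ℝ × ℝ) ≠ 0 := by
  have hx := fst_ne_zero_of_nodal_cubic hC hne
  intro hgrad
  obtain ⟨h₁, h₂⟩ := Prod.mk_eq_zero.mp hgrad
  have hx₁ : 3 * x + 2 = 0 :=
    (mul_eq_zero.mp (by linear_combination h₁ : x * (3 * x + 2) = 0)).resolve_left hx
  have hx₂ : x + 1 = 0 :=
    (mul_eq_zero.mp (by linear_combination hC - y / 2 * h₂ : x ^ 2 * (x + 1) = 0)).resolve_left
      (pow_ne_zero 2 hx)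
  linarith

lemma nodal_cubic_gradient_sq_div_sq {x y : ℝ} (hC : x ^ 3 + x ^ 2 - y ^ 2 = 0) (hx : x ≠ 0) :
    (-2 * y) ^ 2 / (3 * x ^ 2 + 2 * x) ^ 2 = 4 * (x + 1) / (3 * x + 2) ^ 2 := by
  rw [show (-2 * y) ^ 2 = x ^ 2 * (4 * (x + 1)) by linear_combination -4 * hC,
    show 3 * x ^ 2 + 2 * x = x * (3 * x + 2) by ring, mul_pow,
    mul_div_mul_left _ _ (pow_ne_zero 2 hx)]

lemma norm_eq_one_of_tendsto_normalize {E ι : Type*} [NormedAddCommGroup E] [NormedSpace ℝ E]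
    {l : Filter ι} [l.NeBot] {g : ι → E} {v : E} (hg : ∀ i, g i ≠ 0)
    (hv : Tendsto (fun i => ‖g i‖⁻¹ • g i) l (𝓝 v)) : ‖v‖ = 1 :=
  tendsto_nhds_unique hv.norm <| tendsto_const_nhds.congr fun i => by
    rw [norm_smul, norm_inv, norm_norm, inv_mul_cancel₀ (norm_ne_zero_iff.mpr (hg i))]

lemma abs_normalize_fst_sq_sub_snd_sq_le (w : ℝ × ℝ) :
    |(‖w‖⁻¹ • w).1 ^ 2 - (‖w‖⁻¹ • w).2 ^ 2| ≤ |1 - w.2 ^ 2 / w.1 ^ 2| := by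
  simp only [Prod.smul_fst, Prod.smul_snd, smul_eq_mul]
  rcases eq_or_ne w.1 0 with h₁ | h₁
  · have h₂ : |w.2| ≤ ‖w‖ := norm_snd_le w
    rw [h₁, mul_zero, zero_pow two_ne_zero, zero_sub, abs_neg, div_zero, sub_zero, abs_one,
      abs_sq, mul_pow, inv_pow, ← div_eq_inv_mul, ← sq_abs w.2]
    exact div_le_one_of_le₀ (pow_le_pow_left₀ (abs_nonneg _) h₂ 2) (by positivity)
  · have hfst : |w.1| ≤ ‖w‖ := norm_fst_le w
    have hw : 0 < ‖w‖ := (abs_pos.mpr h₁).trans_le hfst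
    calc |(‖w‖⁻¹ * w.1) ^ 2 - (‖w‖⁻¹ * w.2) ^ 2| = |w.1 ^ 2 - w.2 ^ 2| / ‖w‖ ^ 2 := by
          rw [mul_pow, mul_pow, ← mul_sub, abs_mul, inv_pow, abs_of_pos (by positivity),
            div_eq_inv_mul]
      _ ≤ |w.1 ^ 2 - w.2 ^ 2| / w.1 ^ 2 :=
          div_le_div_of_nonneg_left (abs_nonneg _) (by positivity) (sq_le_sq.mpr (by simpa))
      _ = |1 - w.2 ^ 2 / w.1 ^ 2| := by
          rw [one_sub_div (pow_ne_zero 2 h₁), abs_div, abs_sq]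

lemma orthogonal_line_of_sq_eq_sq {v : ℝ × ℝ} (hv : v ≠ 0) (hsq : v.1 ^ 2 = v.2 ^ 2) :
    {p : ℝ × ℝ | v.1 * p.1 + v.2 * p.2 = 0} = {p : ℝ × ℝ | p.1 - p.2 = 0} ∨
    {p : ℝ × ℝ | v.1 * p.1 + v.2 * p.2 = 0} = {p : ℝ × ℝ | p.1 + p.2 = 0} := by
  have hv₁ : v.1 ≠ 0 := fun h =>
    hv (Prod.ext h (pow_eq_zero_iff two_ne_zero |>.mp (by rw [← hsq, h, zero_pow two_ne_zero])))
  rcases sq_eq_sq_iff_eq_or_eq_neg.mp hsq.symm with h | h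
  · right
    ext p
    simp only [Set.mem_ofPred_eq, h, ← mul_add, mul_eq_zero, hv₁, false_or]
  · left
    ext p
    simp only [Set.mem_ofPred_eq, h, neg_mul, ← sub_eq_add_neg, ← mul_sub, mul_eq_zero, hv₁,
      false_or]

/-- Limits of tangent lines to the nodal cubic at nonsingular points approaching the
origin: the limiting line is `x - y = 0` or `x + y = 0`. -/
theorem stmt_1 (a b : ℕ → ℝ)
    (hC : ∀ n, (a n) ^ 3 + (a n) ^ 2 - (b n) ^ 2 = 0)
    (hne : ∀ n, (a n, b n) ≠ (0, 0))
    (hlim : Tendsto (fun n => (a n, b n)) atTop (nhds (0, 0)))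
    (v : ℝ × ℝ)
    (hv : Tendsto
      (fun n => (‖((3 * (a n) ^ 2 + 2 * a n, -2 * b n) : ℝ × ℝ)‖)⁻¹ •
        ((3 * (a n) ^ 2 + 2 * a n, -2 * b n) : ℝ × ℝ)) atTop (nhds v)) :
    {p : ℝ × ℝ | v.1 * p.1 + v.2 * p.2 = 0} = {p : ℝ × ℝ | p.1 - p.2 = 0} ∨
    {p : ℝ × ℝ | v.1 * p.1 + v.2 * p.2 = 0} = {p : ℝ × ℝ | p.1 + p.2 = 0} := by
  set g : ℕ → ℝ × ℝ := fun n => (3 * (a n) ^ 2 + 2 * a n, -2 * b n)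
  have ha : Tendsto a atTop (𝓝 0) := (continuous_fst.tendsto ((0 : ℝ), (0 : ℝ))).comp hlim
  have hunit : ‖v‖ = 1 :=
    norm_eq_one_of_tendsto_normalize (fun n => nodal_cubic_gradient_ne_zero (hC n) (hne n)) hv
  have hslope : Tendsto (fun n => |1 - 4 * (a n + 1) / (3 * a n + 2) ^ 2|) atTop (𝓝 0) := by
    have : ContinuousAt (fun x : ℝ => |1 - 4 * (x + 1) / (3 * x + 2) ^ 2|) 0 := by
      fun_prop (disch := norm_num)
    have h := this.tendsto.comp ha
    norm_num at h
    exact h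
  have hdiff : Tendsto (fun n => (‖g n‖⁻¹ • g n).1 ^ 2 - (‖g n‖⁻¹ • g n).2 ^ 2) atTop (𝓝 0) := by
    refine squeeze_zero_norm (fun n => ?_) hslope
    rw [Real.norm_eq_abs, ← nodal_cubic_gradient_sq_div_sq (hC n)
      (fst_ne_zero_of_nodal_cubic (hC n) (hne n))]
    exact abs_normalize_fst_sq_sub_snd_sq_le (g n)
  have hsq : v.1 ^ 2 - v.2 ^ 2 = 0 :=
    tendsto_nhds_unique
      (((continuous_fst.pow 2).sub (continuous_snd.pow 2)).tendsto v |>.comp hv) hdiff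
  exact orthogonal_line_of_sq_eq_sq (by rintro rfl; simp at hunit) (sub_eq_zero.mp hsq)
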